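/- arXiv:0801.2609 — 2 statements merged into one kernel-verified Lean document; each statement's English description precedes it below -/
import Mathlib

section
/- Let f : X → Y be a morphism of irreducible schemes with dim Y < ∞, and suppose X is caténaire. If f is length-preserving and level-separated, then f is injective on underlying points. -/
open AlgebraicGeometry

/-- Paper convention: `Spz x y` (written `x → y`) means `y` is a specialization of `x`,
i.e. `y` lies in the closure of `{x}`. -/
def Spz {α : Type*} [TopologicalSpace α] (x y : α) : Prop := y ∈ closure ({x} : Set α)

/-- `IsSpzChain c n`: the first `n` steps of `c` form a strict chain of specializations. -/
def IsSpzChain {α : Type*} [TopologicalSpace α] (c : ℕ → α) (n : ℕ) : Prop :=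
  ∀ i < n, Spz (c i) (c (i + 1)) ∧ c i ≠ c (i + 1)

/-- The length `l(x,y) ∈ ℕ∞`: the supremum of lengths of strict chains of specializations
from `x` to `y`. -/
noncomputable def specLength {α : Type*} [TopologicalSpace α] (x y : α) : ℕ∞ :=
  ⨆ n ∈ {n : ℕ | ∃ c : ℕ → α, c 0 = x ∧ c n = y ∧ IsSpzChain c n}, (n : ℕ∞)

/-- The length of a subset: the supremum of `l(x,y)` over specializations `x → y` in `W`. -/
noncomputable def setLength {α : Type*} [TopologicalSpace α] (W : Set α) : ℕ∞ :=
  ⨆ x ∈ W, ⨆ y ∈ W, ⨆ (_ : Spz x y), specLength x y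

/-- The length of a point: the length of the closure of `{x}`. -/
noncomputable def ptLength {α : Type*} [TopologicalSpace α] (x : α) : ℕ∞ :=
  setLength (closure {x})

/-- A map is length-preserving if `l(f x, f y) = l(x, y)` for every specialization
`x → y` of finite length. -/
def LengthPreserving {α β : Type*} [TopologicalSpace α] [TopologicalSpace β] (f : α → β) : Prop :=
  ∀ x y, Spz x y → specLength x y < ⊤ → specLength (f x) (f y) = specLength x y

/-- Two points are Sp-connected if one is a specialization of the other. -/
def SpConnected {α : Type*} [TopologicalSpace α] (x y : α) : Prop := Spz x y ∨ Spz y x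

/-- `f` is level-separated if it sends Sp-disconnected points of equal length to
Sp-disconnected points. -/
def LevelSeparated {α β : Type*} [TopologicalSpace α] [TopologicalSpace β] (f : α → β) : Prop :=
  ∀ x y, ¬SpConnected x y → ptLength x = ptLength y → ¬SpConnected (f x) (f y)

/-- A space is caténaire if `l(x,z) = l(x,y) + l(y,z)` for all specializations
`x → y → z`. -/
def Catenaire (α : Type*) [TopologicalSpace α] : Prop :=
  ∀ x y z : α, Spz x y → Spz y z → specLength x z = specLength x y + specLength y z

/-!
Length preservation forbids `f` from identifying the two ends of a strict specialization of
finite length. Every strict specialization in a scheme passes through an immediate one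
(Kaplansky's lemma on adjacent primes, in an affine chart), which has length one; so a strict
chain in `X` maps to a strict chain of the same length in `Y`, and all lengths in `X` are bounded
by `dim Y`. If now `f x = f y` for Sp-disconnected `x, y` with `l(y) ≤ l(x)`, descend from `x` to
a specialization `z` with `l(z) = l(y)`. Level-separatedness makes `z` and `y` Sp-connected, and
as `l` strictly drops along strict specializations of finite length, this forces `x ⤳ y`.
-/

open Topology

lemma spz_iff_specializes {α : Type*} [TopologicalSpace α] {x y : α} : Spz x y ↔ x ⤳ y :=
  specializes_iff_mem_closure.symm

namespace IsSpzChain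

variable {α : Type*} [TopologicalSpace α] {c : ℕ → α} {m n : ℕ}

lemma mono (hc : IsSpzChain c n) (hmn : m ≤ n) : IsSpzChain c m :=
  fun i hi => hc i (hi.trans_le hmn)

lemma shift (hc : IsSpzChain c n) (k : ℕ) : IsSpzChain (fun i => c (k + i)) (n - k) :=
  fun i hi => hc (k + i) (by omega)

lemma cons (hc : IsSpzChain c n) {x : α} (hx : x ⤳ c 0) (hne : x ≠ c 0) :
    IsSpzChain (fun | 0 => x | i + 1 => c i) (n + 1)
  | 0, _ => ⟨spz_iff_specializes.2 hx, hne⟩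
  | i + 1, hi => hc i (by omega)

lemma specializes (hc : IsSpzChain c n) {i j : ℕ} (hij : i ≤ j) (hjn : j ≤ n) : c i ⤳ c j := by
  induction j, hij using Nat.le_induction with
  | base => exact specializes_rfl
  | succ j _ ih => exact (ih (by omega)).trans (spz_iff_specializes.1 (hc j (by omega)).1)

lemma ne_of_lt [T0Space α] (hc : IsSpzChain c n) {i j : ℕ} (hij : i < j) (hjn : j ≤ n) :
    c i ≠ c j := by
  intro hcij
  have hback : c (i + 1) ⤳ c i := hcij ▸ hc.specializes hij hjn
  exact (hc i (by omega)).2 ((spz_iff_specializes.1 (hc i (by omega)).1).antisymm hback).eq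

end IsSpzChain

section SpecLength

variable {α : Type*} [TopologicalSpace α] {x y : α}

lemma natCast_le_specLength {c : ℕ → α} {n : ℕ} (hc : IsSpzChain c n) (h0 : c 0 = x)
    (hn : c n = y) : (n : ℕ∞) ≤ specLength x y :=
  le_biSup (fun n : ℕ => (n : ℕ∞)) ⟨c, h0, hn, hc⟩

lemma specLength_le_of_forall_isSpzChain {B : ℕ∞}
    (hB : ∀ (c : ℕ → α) (n : ℕ), IsSpzChain c n → (n : ℕ∞) ≤ B) :
    specLength x y ≤ B :=
  iSup₂_le fun _ ⟨c, _, _, hc⟩ => hB c _ hc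

lemma one_le_specLength (h : x ⤳ y) (hne : x ≠ y) : 1 ≤ specLength x y := by
  simpa using natCast_le_specLength (c := fun | 0 => x | _ + 1 => y) (n := 1)
    (fun | 0, _ => ⟨spz_iff_specializes.2 h, hne⟩) rfl rfl

variable [T0Space α]

lemma specLength_self (x : α) : specLength x x = 0 :=
  nonpos_iff_eq_zero.1 <| iSup₂_le fun n ⟨c, h0, hn, hc⟩ => by
    rcases Nat.eq_zero_or_pos n with rfl | hpos
    · rfl
    · exact absurd (h0.trans hn.symm) (hc.ne_of_lt hpos le_rfl)

end SpecLength

def IsImmediateSpecialization {α : Type*} [TopologicalSpace α] (x y : α) : Prop :=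
  x ⤳ y ∧ x ≠ y ∧ ∀ z, x ⤳ z → z ⤳ y → z = x ∨ z = y

lemma IsImmediateSpecialization.specLength_eq_one {α : Type*} [TopologicalSpace α] [T0Space α]
    {x y : α} (h : IsImmediateSpecialization x y) : specLength x y = 1 := by
  refine le_antisymm (iSup₂_le fun n ⟨c, h0, hn, hc⟩ => ?_) (one_le_specLength h.1 h.2.1)
  by_contra! hlt
  have hn2 : 2 ≤ n := by exact_mod_cast Order.add_one_le_of_lt hlt
  have hx1 : x ⤳ c 1 := h0 ▸ hc.specializes (Nat.zero_le 1) (by omega)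
  have h1y : c 1 ⤳ y := hn ▸ hc.specializes (by omega) le_rfl
  rcases h.2.2 (c 1) hx1 h1y with h1 | h1
  · exact hc.ne_of_lt zero_lt_one (by omega) (h0.trans h1.symm)
  · exact hc.ne_of_lt (by omega : 1 < n) le_rfl (h1.trans hn.symm)

lemma IsImmediateSpecialization.map {α β : Type*} [TopologicalSpace α] [TopologicalSpace β]
    {g : α → β} (hg : IsOpenEmbedding g) {a b : α}
    (h : IsImmediateSpecialization a b) : IsImmediateSpecialization (g a) (g b) := by
  refine ⟨h.1.map hg.continuous, hg.injective.ne h.2.1, fun z haz hzb => ?_⟩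
  obtain ⟨z, rfl⟩ := hzb.mem_open hg.isOpen_range ⟨b, rfl⟩
  rw [hg.isInducing.specializes_iff] at haz hzb
  exact (h.2.2 z haz hzb).imp (congrArg g) (congrArg g)

theorem Ideal.sSup_isPrime_of_isChain {R : Type*} [CommRing R] {s : Set (Ideal R)}
    (hs : s.Nonempty) (hs' : IsChain (· ≤ ·) s) (H : ∀ p ∈ s, p.IsPrime) : (sSup s).IsPrime := by
  have hmem (r : R) : r ∈ sSup s ↔ ∃ p ∈ s, r ∈ p :=
    Submodule.mem_sSup_of_directed hs hs'.directedOn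
  refine ⟨fun htop => ?_, fun {a b} hab => ?_⟩
  · obtain ⟨p, hp, h1⟩ := (hmem 1).1 (htop ▸ Submodule.mem_top)
    exact (H p hp).ne_top ((Ideal.eq_top_iff_one p).2 h1)
  · obtain ⟨p, hp, hab⟩ := (hmem _).1 hab
    exact ((H p hp).mem_or_mem hab).imp (fun ha => (hmem a).2 ⟨p, hp, ha⟩)
      (fun hb => (hmem b).2 ⟨p, hp, hb⟩)

/-- Kaplansky: for `r ∈ y \ x`, a prime `a ⊇ x` maximal among the primes inside `y` avoiding `r`
and a minimal prime `b` over `a + (r)` inside `y` form the covering pair. -/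
theorem PrimeSpectrum.exists_le_covBy_le {R : Type*} [CommRing R] {x y : PrimeSpectrum R}
    (hxy : x < y) : ∃ a b : PrimeSpectrum R, x ≤ a ∧ a ⋖ b ∧ b ≤ y := by
  obtain ⟨r, hry, hrx⟩ := SetLike.exists_of_lt ((asIdeal_lt_asIdeal _ _).2 hxy)
  let S := {p : PrimeSpectrum R | p ≤ y ∧ r ∉ p.asIdeal}
  have hS : ∀ C ⊆ S, IsChain (· ≤ ·) C → ∀ p ∈ C, ∃ ub ∈ S, ∀ q ∈ C, q ≤ ub := by
    intro C hC hCchain p hp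
    have hne : (asIdeal '' C).Nonempty := ⟨_, p, hp, rfl⟩
    have hchain : IsChain (· ≤ ·) (asIdeal '' C) :=
      hCchain.image_of_map_rel _ _ asIdeal fun _ _ h => h
    have hprime := Ideal.sSup_isPrime_of_isChain hne hchain (by
      rintro _ ⟨q, -, rfl⟩; exact q.isPrime)
    refine ⟨⟨sSup (asIdeal '' C), hprime⟩,
      ⟨(asIdeal_le_asIdeal _ _).1 (sSup_le ?_), fun hr => ?_⟩,
      fun q hq => le_sSup (Set.mem_image_of_mem asIdeal hq)⟩
    · rintro _ ⟨q, hq, rfl⟩; exact (hC hq).1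
    · obtain ⟨_, ⟨q, hq, rfl⟩, hrq⟩ :=
        (Submodule.mem_sSup_of_directed hne hchain.directedOn).1 hr
      exact (hC hq).2 hrq
  obtain ⟨a, hxa, ha⟩ := zorn_le_nonempty₀ S hS x ⟨hxy.le, hrx⟩
  have hsup : a.asIdeal ⊔ Ideal.span {r} ≤ y.asIdeal :=
    sup_le ha.1.1 (Ideal.span_le.2 (Set.singleton_subset_iff.2 hry))
  obtain ⟨q, hq, hqy⟩ := Ideal.exists_minimalPrimes_le hsup
  have hrq : r ∈ q := hq.1.2 (Ideal.mem_sup_right (Ideal.mem_span_singleton_self r))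
  refine ⟨a, ⟨q, hq.1.1⟩, hxa, ⟨lt_of_le_of_ne (le_sup_left.trans hq.1.2) ?_, ?_⟩, hqy⟩
  · intro hab; exact ha.1.2 (hab ▸ hrq)
  · intro z haz hzq
    by_cases hrz : r ∈ z.asIdeal
    · exact hzq.not_ge (hq.2 ⟨z.isPrime, sup_le haz.le
        (Ideal.span_le.2 (Set.singleton_subset_iff.2 hrz))⟩ hzq.le)
    · exact haz.not_ge (ha.2 ⟨hzq.le.trans hqy, hrz⟩ haz.le)

lemma PrimeSpectrum.exists_isImmediateSpecialization {R : Type*} [CommRing R]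
    {x y : PrimeSpectrum R} (h : x ⤳ y) (hne : x ≠ y) :
    ∃ a b, x ⤳ a ∧ IsImmediateSpecialization a b ∧ b ⤳ y := by
  simp only [← le_iff_specializes] at h ⊢
  obtain ⟨a, b, hxa, hab, hby⟩ := exists_le_covBy_le (lt_of_le_of_ne h hne)
  exact ⟨a, b, hxa, ⟨(le_iff_specializes _ _).1 hab.le, hab.ne,
    fun z haz hzb => hab.eq_or_eq ((le_iff_specializes _ _).2 haz)
      ((le_iff_specializes _ _).2 hzb)⟩, hby⟩

lemma AlgebraicGeometry.Scheme.exists_isImmediateSpecialization {X : Scheme} {x y : X}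
    (h : x ⤳ y) (hne : x ≠ y) : ∃ a b, x ⤳ a ∧ IsImmediateSpecialization a b ∧ b ⤳ y := by
  let 𝒰 := X.affineOpenCover
  obtain ⟨i, y, rfl⟩ : ∃ i, y ∈ Set.range (𝒰.f i) := ⟨_, 𝒰.covers y⟩
  have hg : IsOpenEmbedding (𝒰.f i) := (𝒰.f i).isOpenEmbedding
  obtain ⟨x, rfl⟩ := h.mem_open hg.isOpen_range ⟨y, rfl⟩
  obtain ⟨a, b, hxa, hab, hby⟩ := PrimeSpectrum.exists_isImmediateSpecialization
    (hg.isInducing.specializes_iff.1 h) (hg.injective.ne_iff.1 hne)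
  exact ⟨𝒰.f i a, 𝒰.f i b, hxa.map hg.continuous, hab.map hg, hby.map hg.continuous⟩

section PtLength

variable {α : Type*} [TopologicalSpace α] {x y : α}

lemma specLength_le_ptLength {a b : α} (hxa : x ⤳ a) (hab : a ⤳ b) :
    specLength a b ≤ ptLength x :=
  le_iSup₂_of_le a (specializes_iff_mem_closure.1 hxa) <|
    le_iSup₂_of_le b (specializes_iff_mem_closure.1 (hxa.trans hab)) <|
      le_iSup_of_le (spz_iff_specializes.2 hab) le_rfl

lemma natCast_le_ptLength_iff {n : ℕ} :
    (n : ℕ∞) ≤ ptLength x ↔ ∃ c : ℕ → α, x ⤳ c 0 ∧ IsSpzChain c n := by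
  constructor
  · intro h
    cases n with
    | zero => exact ⟨fun _ => x, specializes_rfl, fun i hi => absurd hi (Nat.not_lt_zero i)⟩
    | succ m =>
      rw [Nat.cast_add_one, ENat.natCast_add_one_le_iff] at h
      simp only [ptLength, setLength, specLength, lt_iSup_iff] at h
      obtain ⟨a, ha, -, -, -, k, ⟨c, hc0, -, hc⟩, hmk⟩ := h
      exact ⟨c, hc0 ▸ specializes_iff_mem_closure.2 ha, hc.mono (by exact_mod_cast hmk)⟩
  · rintro ⟨c, hxc, hc⟩
    exact (natCast_le_specLength hc rfl rfl).trans
      (specLength_le_ptLength hxc (hc.specializes (Nat.zero_le n) le_rfl))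

lemma ptLength_le_of_forall_isSpzChain {B : ℕ∞}
    (hB : ∀ (c : ℕ → α) (n : ℕ), IsSpzChain c n → (n : ℕ∞) ≤ B) :
    ptLength x ≤ B :=
  ENat.forall_natCast_le_iff_le.1 fun _ hn =>
    have ⟨c, _, hc⟩ := natCast_le_ptLength_iff.1 hn
    hB c _ hc

lemma Specializes.ptLength_le (h : x ⤳ y) : ptLength y ≤ ptLength x :=
  ENat.forall_natCast_le_iff_le.1 fun _ hn =>
    have ⟨c, hyc, hc⟩ := natCast_le_ptLength_iff.1 hn
    natCast_le_ptLength_iff.2 ⟨c, h.trans hyc, hc⟩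

variable [T0Space α]

lemma ptLength_add_one_le (h : x ⤳ y) (hne : x ≠ y) : ptLength y + 1 ≤ ptLength x := by
  refine ENat.forall_natCast_le_iff_le.1 fun k hk => ?_
  cases k with
  | zero => exact zero_le
  | succ m =>
    rw [Nat.cast_add_one, ENat.add_le_add_iff_right ENat.one_ne_top] at hk
    obtain ⟨c, hyc, hc⟩ := natCast_le_ptLength_iff.1 hk
    have hxc : x ≠ c 0 := fun hx => hne (h.antisymm (hx ▸ hyc)).eq
    exact natCast_le_ptLength_iff.2 ⟨_, specializes_rfl, hc.cons (h.trans hyc) hxc⟩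

lemma IsSpzChain.ptLength_add_le {c : ℕ → α} {n : ℕ} (hc : IsSpzChain c n) :
    ptLength (c n) + n ≤ ptLength (c 0) := by
  induction n with
  | zero => simp
  | succ n ih =>
    have hstep := ptLength_add_one_le (spz_iff_specializes.1 (hc n n.lt_succ_self).1)
      (hc n n.lt_succ_self).2
    calc ptLength (c (n + 1)) + ↑(n + 1) = ptLength (c (n + 1)) + 1 + n := by push_cast; ring
      _ ≤ ptLength (c n) + n := by gcongr
      _ ≤ ptLength (c 0) := ih (hc.mono n.le_succ)

lemma eq_of_specializes_of_ptLength_eq (h : x ⤳ y) (hxy : ptLength x = ptLength y)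
    (hfin : ptLength x ≠ ⊤) : x = y := by
  by_contra hne
  have := ptLength_add_one_le h hne
  rw [← hxy] at this
  exact absurd this (ENat.lt_add_one_iff hfin |>.2 le_rfl).not_ge

lemma exists_specializes_ptLength_eq {N k : ℕ} (hx : ptLength x = N) (hk : k ≤ N) :
    ∃ y, x ⤳ y ∧ ptLength y = k := by
  obtain ⟨c, hxc, hc⟩ := natCast_le_ptLength_iff.1 hx.ge
  refine ⟨c (N - k), hxc.trans (hc.specializes (Nat.zero_le _) (by omega)), le_antisymm ?_ ?_⟩
  · have hle : ptLength (c (N - k)) + (N - k : ℕ) ≤ N :=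
      (hc.mono (Nat.sub_le N k)).ptLength_add_le.trans (hx ▸ hxc.ptLength_le)
    calc ptLength (c (N - k)) ≤ (N : ℕ∞) - (N - k : ℕ) :=
          ENat.le_sub_of_add_le_right (ENat.natCast_ne_top _) hle
      _ = k := by rw [← ENat.natCast_sub, Nat.sub_sub_self hk]
  · refine natCast_le_ptLength_iff.2 ⟨fun i => c (N - k + i), specializes_rfl, ?_⟩
    simpa [Nat.sub_sub_self hk] using hc.shift (N - k)

end PtLength

lemma IsSpzChain.natCast_le_topologicalKrullDim {β : Type*} [TopologicalSpace β] [T0Space β]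
    {c : ℕ → β} {n : ℕ} (hc : IsSpzChain c n) : (n : WithBot ℕ∞) ≤ topologicalKrullDim β := by
  let Z (i : Fin (n + 1)) : (TopologicalSpace.IrreducibleCloseds β)ᵒᵈ :=
    OrderDual.toDual ⟨closure {c i}, isIrreducible_singleton.closure, isClosed_closure⟩
  have hZ : StrictMono Z := Fin.strictMono_iff_lt_succ.2 fun i => by
    have hstep := hc i i.isLt
    refine (SetLike.coe_ssubset_coe (A := TopologicalSpace.IrreducibleCloseds β)).1 ?_
    refine ssubset_of_subset_not_subset
      (specializes_iff_closure_subset.1 (spz_iff_specializes.1 hstep.1)) fun hsub => hstep.2 ?_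
    exact ((spz_iff_specializes.1 hstep.1).antisymm (specializes_iff_closure_subset.2 hsub)).eq
  simpa [topologicalKrullDim] using Order.LTSeries.length_le_krullDim (LTSeries.mk n Z hZ)

lemma IsSpzChain.exists_isSpzChain_map {α β : Type*} [TopologicalSpace α] [TopologicalSpace β]
    [T0Space β] (hα : ∀ x y : α, x ⤳ y → x ≠ y →
      ∃ a b, x ⤳ a ∧ IsImmediateSpecialization a b ∧ b ⤳ y)
    {g : α → β} (hg : Continuous g) (hgab : ∀ a b, IsImmediateSpecialization a b → g a ≠ g b)
    {c : ℕ → α} {n : ℕ} (hc : IsSpzChain c n) : ∃ e : ℕ → β, g (c 0) ⤳ e 0 ∧ IsSpzChain e n := by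
  induction n generalizing c with
  | zero => exact ⟨fun _ => g (c 0), specializes_rfl, fun i hi => absurd hi (Nat.not_lt_zero i)⟩
  | succ n ih =>
    obtain ⟨e, he, hce⟩ := ih (by simpa using hc.shift 1)
    obtain ⟨a, b, hca, hab, hbc⟩ := hα _ _ (spz_iff_specializes.1 (hc 0 n.succ_pos).1)
      (hc 0 n.succ_pos).2
    have hbe : g b ⤳ e 0 := (hbc.map hg).trans (by simpa using he)
    have hae : g a ≠ e 0 := fun hae =>
      hgab a b hab ((hab.1.map hg).antisymm (hae ▸ hbe)).eq
    exact ⟨_, hca.map hg, hce.cons ((hab.1.map hg).trans hbe) hae⟩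

lemma LengthPreserving.apply_ne {α β : Type*} [TopologicalSpace α] [TopologicalSpace β]
    [T0Space β] {f : α → β} (hf : LengthPreserving f) {x y : α} (h : x ⤳ y) (hne : x ≠ y)
    (hfin : specLength x y < ⊤) : f x ≠ f y := fun hxy => by
  have := hf x y (spz_iff_specializes.2 h) hfin
  rw [hxy, specLength_self (f y)] at this
  exact (one_le_specLength h hne).not_gt (this ▸ zero_lt_one)

theorem LevelSeparated.injective {α β : Type*} [TopologicalSpace α] [TopologicalSpace β]
    [T0Space α] {f : α → β} (hls : LevelSeparated f) (hf : Continuous f)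
    (hpt : ∀ x : α, ptLength x ≠ ⊤) (hsp : ∀ x y : α, x ⤳ y → x ≠ y → f x ≠ f y) :
    Function.Injective f := by
  intro x y hxy
  by_contra hne
  wlog hle : ptLength y ≤ ptLength x generalizing x y
  · exact this hxy.symm (Ne.symm hne) (le_of_not_ge hle)
  have hdisc : ¬ SpConnected x y := by
    rintro (h | h)
    · exact hsp x y (spz_iff_specializes.1 h) hne hxy
    · exact hsp y x (spz_iff_specializes.1 h) (Ne.symm hne) hxy.symm
  obtain ⟨N, hN⟩ := ENat.ne_top_iff_exists.1 (hpt x)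
  obtain ⟨k, hk⟩ := ENat.ne_top_iff_exists.1 (hpt y)
  obtain ⟨z, hxz, hz⟩ := exists_specializes_ptLength_eq (k := k) hN.symm
    (by rw [← hN, ← hk] at hle; exact_mod_cast hle)
  have hzy : SpConnected z y := by
    by_contra hzy
    refine hls z y hzy (hz.trans hk) (Or.inr ?_)
    exact spz_iff_specializes.2 (hxy ▸ hxz.map hf)
  rcases hzy with hzy | hyz
  · exact hdisc (Or.inl (spz_iff_specializes.2 (hxz.trans (spz_iff_specializes.1 hzy))))
  · have hyz_eq := eq_of_specializes_of_ptLength_eq (spz_iff_specializes.1 hyz)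
      (hz.trans hk).symm (hpt y)
    exact hdisc (Or.inl (spz_iff_specializes.2 (hyz_eq ▸ hxz)))

lemma WithBot.ENat.exists_natCast_ge_of_lt_top {a : WithBot ℕ∞} (ha : a < ⊤) :
    ∃ d : ℕ, a ≤ d := by
  induction a using WithBot.recBotCoe with
  | bot => exact ⟨0, bot_le⟩
  | coe e =>
    obtain ⟨d, rfl⟩ := ENat.ne_top_iff_exists.1 (WithBot.coe_lt_coe.1 ha).ne
    exact ⟨d, le_rfl⟩

theorem injective_of_lengthPreserving_levelSeparated_general {X Y : Scheme} (f : X ⟶ Y)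
    (hdim : topologicalKrullDim Y < ⊤)
    (hlp : LengthPreserving f.base) (hls : LevelSeparated f.base) :
    Function.Injective f.base := by
  obtain ⟨d, hd⟩ := WithBot.ENat.exists_natCast_ge_of_lt_top hdim
  have hbound (c : ℕ → X) (n : ℕ) (hc : IsSpzChain c n) : (n : ℕ∞) ≤ d := by
    obtain ⟨e, -, he⟩ := hc.exists_isSpzChain_map
      (fun _ _ => Scheme.exists_isImmediateSpecialization) f.continuous
      fun a b hab => hlp.apply_ne hab.1 hab.2.1 (by simp [hab.specLength_eq_one])
    exact_mod_cast he.natCast_le_topologicalKrullDim.trans hd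
  refine LevelSeparated.injective hls f.continuous
    (fun x => ne_top_of_le_ne_top (ENat.natCast_ne_top d)
      (ptLength_le_of_forall_isSpzChain hbound))
    fun x y h hne => hlp.apply_ne h hne ?_
  exact (specLength_le_of_forall_isSpzChain hbound).trans_lt (ENat.natCast_lt_top d)

/-- A length-preserving and level-separated morphism between irreducible
schemes, with `X` caténaire and `dim Y < ∞`, is injective on points. -/
theorem injective_of_lengthPreserving_levelSeparated {X Y : Scheme} (f : X ⟶ Y)
    [IrreducibleSpace X] [IrreducibleSpace Y]
    (hdim : topologicalKrullDim Y < ⊤) (hcat : Catenaire X)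
    (hlp : LengthPreserving f.base) (hls : LevelSeparated f.base) :
    Function.Injective f.base :=
  injective_of_lengthPreserving_levelSeparated_general f hdim hlp hls
end

section
/- Let f : X → Y be a morphism of schemes whose underlying map on points is injective. Then dim X ≤ dim Y (as topological Krull dimensions, allowing the value ∞). -/
open AlgebraicGeometry

namespace TopologicalSpace.IrreducibleCloseds

variable {α β : Type*} [TopologicalSpace α] [TopologicalSpace β]

/-- The generic point of `s` is sent to a generic point of `map f hf s`; in a T₀ space the latter
is unique, so injectivity of `f` on points lifts to irreducible closed sets. -/
lemma map_injective_of_injective [QuasiSober β] [T0Space α] {f : β → α} (hf : Continuous f)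
    (hinj : Function.Injective f) : Function.Injective (map f hf) := by
  intro s t hst
  have hs := s.isIrreducible.isGenericPoint_genericPoint s.isClosed
  have ht := t.isIrreducible.isGenericPoint_genericPoint t.isClosed
  have hclosure : closure (f '' s) = closure (f '' t) := congr($hst)
  have himage := (hs.image hf).eq (hclosure ▸ ht.image hf)
  ext1
  rw [← hs.def, ← ht.def, hinj himage]

lemma map_strictMono_of_injective [QuasiSober β] [T0Space α] {f : β → α} (hf : Continuous f)
    (hinj : Function.Injective f) : StrictMono (map f hf) :=
  (map_mono hf).strictMono_of_injective (map_injective_of_injective hf hinj)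

end TopologicalSpace.IrreducibleCloseds

lemma Continuous.topologicalKrullDim_le_of_injective {X Y : Type*} [TopologicalSpace X]
    [TopologicalSpace Y] [QuasiSober X] [T0Space Y] {f : X → Y} (hf : Continuous f)
    (hinj : Function.Injective f) : topologicalKrullDim X ≤ topologicalKrullDim Y :=
  Order.krullDim_le_of_strictMono _
    (TopologicalSpace.IrreducibleCloseds.map_strictMono_of_injective hf hinj)

/-- A morphism of schemes that is injective on underlying points
satisfies `dim X ≤ dim Y` for the topological Krull dimensions. -/
theorem dim_le_dim_of_injective {X Y : Scheme} (f : X ⟶ Y)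
    (hinj : Function.Injective f.base) :
    topologicalKrullDim X ≤ topologicalKrullDim Y :=
  f.continuous.topologicalKrullDim_le_of_injective hinj
end
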